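/- Fix a nonnegative integer k, and define C_k(m) = ∑_{D=1}^{m} (−1)^{m−D} D^{m+k−1} / ((m−D)! · D!) for each positive integer m. Then for every real number x with 0 ≤ x and x·e^{x+1} < 1, the series ∑_{m=1}^{∞} C_k(m)·x^m and ∑_{D=1}^{∞} (D^{D+k−1}/D!)·(x·e^{−x})^D both converge, and their sums are equal. -/

import Mathlib

/-- `C k m = ∑_{D=1}^m (−1)^{m−D} D^{m+k−1} / ((m−D)!·D!)`, as a real number. -/
noncomputable def C (k m : ℕ) : ℝ :=
  ∑ D ∈ Finset.Icc 1 m,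
    ((-1 : ℝ)) ^ (m - D) * (D : ℝ) ^ (m + k - 1) / ((m - D).factorial * D.factorial)

/-!
Expanding `exp (-(D+1)x)` in the `D`-th term of the second series gives the double family
`(-1)^j (D+1)^(D+j+k) x^(D+j+1) / (j! (D+1)!)`. Its absolute values sum over `j` to
`(D+1)^(D+k) x^(D+1) e^((D+1)x) / (D+1)! ≤ (D+1)^k (x e^(x+1))^(D+1)`, using `n^n/n! ≤ e^n`,
so the family is absolutely summable when `x e^(x+1) < 1`. Summing it by rows gives the second
series, and summing it along the antidiagonals `D + j = m - 1` gives `C k m * x^m`.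
-/

open Finset Nat Real

theorem HasSum.sum_antidiagonal {α A : Type*} [AddCommMonoid α] [TopologicalSpace α]
    [ContinuousAdd α] [RegularSpace α] [AddMonoid A] [HasAntidiagonal A]
    {f : A × A → α} {a : α} (h : HasSum f a) :
    HasSum (fun n => ∑ p ∈ antidiagonal n, f p) a :=
  (HasAntidiagonal.sigmaAntidiagonalEquivProd.hasSum_iff.2 h).sigma fun n => by
    rw [← sum_coe_sort]
    exact hasSum_fintype _

theorem Real.hasSum_mul_pow_div_factorial (a t : ℝ) :
    HasSum (fun j => a * t ^ j / j !) (a * exp t) := by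
  simpa only [mul_div_assoc, exp_eq_exp_ℝ] using
    (NormedSpace.expSeries_div_hasSum_exp t).mul_left a

theorem summable_prod_mul_pow_div_factorial {a t : ℕ → ℝ}
    (h : Summable fun D => |a D| * exp |t D|) :
    Summable fun p : ℕ × ℕ => a p.1 * t p.1 ^ p.2 / p.2 ! := by
  have hrow (D : ℕ) : HasSum (fun j => |a D * t D ^ j / (j ! : ℝ)|) (|a D| * exp |t D|) := by
    simpa only [abs_div, abs_mul, abs_pow, Nat.abs_cast] using
      Real.hasSum_mul_pow_div_factorial |a D| |t D|
  refine summable_abs_iff.1 <| (summable_prod_of_nonneg fun _ => abs_nonneg _).2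
    ⟨fun D => (hrow D).summable, ?_⟩
  simpa only [(hrow _).tsum_eq] using h

theorem exists_hasSum_sum_antidiagonal_and_hasSum_mul_exp {a t : ℕ → ℝ}
    (h : Summable fun D => |a D| * exp |t D|) :
    ∃ S, HasSum (fun n => ∑ p ∈ antidiagonal n, a p.1 * t p.1 ^ p.2 / p.2 !) S ∧
      HasSum (fun D => a D * exp (t D)) S :=
  have hS := (summable_prod_mul_pow_div_factorial h).hasSum
  ⟨_, hS.sum_antidiagonal, hS.prod_fiberwise fun _ => Real.hasSum_mul_pow_div_factorial _ _⟩

theorem summable_pow_add_div_factorial_mul_pow (k : ℕ) {y : ℝ} (hy : |y| * exp 1 < 1) :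
    Summable fun n : ℕ => (n : ℝ) ^ (n + k) / n ! * y ^ n := by
  refine Summable.of_norm_bounded
    (summable_pow_mul_geometric_of_norm_lt_one k (r := |y| * exp 1) (by simpa)) fun n => ?_
  have hn : (n : ℝ) ^ n / n ! ≤ exp 1 ^ n := by
    simpa only [← Real.exp_nat_mul, mul_one] using Real.pow_div_factorial_le_exp _ n.cast_nonneg n
  calc ‖(n : ℝ) ^ (n + k) / n ! * y ^ n‖ = (n : ℝ) ^ k * ((n : ℝ) ^ n / n !) * |y| ^ n := by
        rw [Real.norm_eq_abs, abs_mul, abs_div, abs_pow, abs_pow, Nat.abs_cast, Nat.abs_cast]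
        ring
    _ ≤ (n : ℝ) ^ k * exp 1 ^ n * |y| ^ n := by gcongr
    _ = (n : ℝ) ^ k * (|y| * exp 1) ^ n := by ring

theorem C_succ_eq_sum_antidiagonal (k n : ℕ) :
    C k (n + 1) = ∑ p ∈ antidiagonal n,
      (-1 : ℝ) ^ p.2 * ((p.1 + 1 : ℕ) : ℝ) ^ (n + k) / (p.2 ! * (p.1 + 1)!) := by
  rw [C, Nat.sum_antidiagonal_eq_sum_range_succ_mk, ← Ico_add_one_right_eq_Icc,
    sum_Ico_eq_sum_range]
  refine sum_congr rfl fun D _ => ?_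
  rw [add_comm 1 D, Nat.add_sub_add_right, Nat.add_right_comm, Nat.add_sub_cancel]

/-- for fixed `k` and `0 ≤ x` with `x·e^{x+1} < 1`, the series
`∑_{m=1}^∞ C_k(m)·x^m` and `∑_{D=1}^∞ (D^{D+k−1}/D!)·(x·e^{−x})^D` both converge,
with the same sum.  (Both series are indexed by `ℕ`, shifted by one.) -/
theorem stmt14 (k : ℕ) (x : ℝ) (hx0 : 0 ≤ x) (hx : x * Real.exp (x + 1) < 1) :
    ∃ S : ℝ,
      HasSum (fun j : ℕ => C k (j + 1) * x ^ (j + 1)) S ∧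
      HasSum
        (fun n : ℕ =>
          ((n + 1 : ℕ) ^ (n + k) / (n + 1).factorial : ℝ) * (x * Real.exp (-x)) ^ (n + 1))
        S := by
  set a : ℕ → ℝ := fun D => ((D + 1 : ℕ) : ℝ) ^ (D + k) / (D + 1)! * x ^ (D + 1)
  set t : ℕ → ℝ := fun D => -(((D + 1 : ℕ) : ℝ) * x)
  have hmajorant : Summable fun D => |a D| * exp |t D| := by
    have hy : |x * exp x| * exp 1 < 1 := by
      rwa [abs_of_nonneg (by positivity), mul_assoc, ← exp_add]
    refine ((summable_nat_add_iff 1).2 (summable_pow_add_div_factorial_mul_pow k hy)).of_nonneg_of_le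
      (fun _ => by positivity) fun D => ?_
    rw [abs_of_nonneg (by positivity), abs_neg, abs_of_nonneg (by positivity), Real.exp_nat_mul,
      mul_pow, ← mul_assoc]
    simp only [a]
    gcongr
    · exact_mod_cast Nat.le_add_left 1 D
    · omega
  obtain ⟨S, h_antidiagonal, h_rows⟩ := exists_hasSum_sum_antidiagonal_and_hasSum_mul_exp hmajorant
  refine ⟨S, h_antidiagonal.congr_fun fun n => ?_, h_rows.congr_fun fun D => ?_⟩
  · rw [C_succ_eq_sum_antidiagonal, sum_mul]
    refine sum_congr rfl fun p hp => ?_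
    obtain rfl := mem_antidiagonal.1 hp
    simp only [a, t]
    ring
  · rw [mul_pow, ← Real.exp_nat_mul, mul_neg]
    simp only [a, t]
    ring
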